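/- arXiv:0906.2708 — 3 statements merged into one kernel-verified Lean document; each statement's English description precedes it below -/
import Mathlib

section
/- Let I be a linear order and let m, n be natural numbers. Let h : Fin m → ℕ → I be a family of functions such that each h k is monotone (nondecreasing), and such that for every p ∈ ℕ the values are strictly increasing in the index, i.e. h k p < h k' p whenever k < k'. Let a : Fin n → I be a tuple of elements of I. Then there exists p ≤ 2*n*m + 1 such that for every k : Fin m and every j : Fin n, the position of h k p relative to a j equals the position of h k (p+1) relative to a j (i.e. compare (h k p) (a j) = compare (h k (p+1)) (a j)); in other words, the tuples (h k p)_{k} and (h k (p+1))_{k} have the same order type over (a j)_{j}. -/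
/-!
Rank each position `compare x a` as `lt < eq < gt`; for fixed `a` this rank is monotone in `x`.
The ranks of the `m * n` pairs `(h k p, a j)` are then `m * n` nondecreasing sequences with values
in `{0, 1, 2}`, so their sum, which is at most `2 * m * n`, cannot increase at each of the steps
`p = 0, …, 2 * m * n`. At a step where the sum does not increase, no rank changes.
-/

def Ordering.rank : Ordering → ℕ
  | .lt => 0
  | .eq => 1
  | .gt => 2

namespace Ordering

theorem rank_injective : Function.Injective rank := by
  intro o o'
  cases o <;> cases o' <;> simp [rank]

theorem rank_le_two (o : Ordering) : o.rank ≤ 2 := by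
  cases o <;> simp [rank]

theorem monotone_rank_compare {α : Type*} [LinearOrder α] (a : α) :
    Monotone fun x => (compare x a).rank := by
  intro x y hxy
  rcases lt_trichotomy x a with hx | rfl | hx
  · simp [compare_lt_iff_lt.2 hx, rank]
  · rcases hxy.eq_or_lt with rfl | hlt
    · rfl
    · simp [compare_gt_iff_gt.2 hlt, rank]
  · simp [compare_gt_iff_gt.2 (hx.trans_le hxy), compare_gt_iff_gt.2 hx]

end Ordering

theorem Nat.exists_lt_apply_eq_apply_succ {f : ℕ → ℕ} (hf : Monotone f) {N : ℕ}
    (hN : f N < f 0 + N) : ∃ p < N, f p = f (p + 1) := by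
  by_contra! hne
  have hgrow : ∀ t ≤ N, f 0 + t ≤ f t := by
    intro t
    induction t with
    | zero => simp
    | succ t ih =>
      intro ht
      have hlt : f t < f (t + 1) := (hf t.le_succ).lt_of_ne (hne t ht)
      have := ih (by omega)
      omega
  exact absurd (hgrow N le_rfl) (not_le.2 hN)

theorem Fintype.exists_le_forall_apply_eq_apply_succ {ι : Type*} [Fintype ι] {g : ι → ℕ → ℕ}
    (hg : ∀ i, Monotone (g i)) {B : ℕ} (hB : ∀ i p, g i p ≤ B) :
    ∃ p ≤ Fintype.card ι * B, ∀ i, g i p = g i (p + 1) := by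
  set F : ℕ → ℕ := fun p => ∑ i, g i p
  have hF : Monotone F := fun p q hpq => Finset.sum_le_sum fun i _ => hg i hpq
  have hbound : F (Fintype.card ι * B + 1) < F 0 + (Fintype.card ι * B + 1) := by
    have : F (Fintype.card ι * B + 1) ≤ Fintype.card ι * B := by
      simpa using Finset.sum_le_card_nsmul Finset.univ (g · _) B fun i _ => hB i _
    omega
  obtain ⟨p, hp, hFp⟩ := Nat.exists_lt_apply_eq_apply_succ hF hbound
  refine ⟨p, Nat.lt_succ_iff.1 hp, fun i => ?_⟩
  exact (Finset.sum_eq_sum_iff_of_le fun i _ => hg i p.le_succ).1 hFp i (Finset.mem_univ i)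

theorem stmt_0_general {I : Type*} [LinearOrder I] (m n : ℕ)
    (h : Fin m → ℕ → I)
    (hmono : ∀ k : Fin m, Monotone (h k))
    (a : Fin n → I) :
    ∃ p : ℕ, p ≤ 2 * n * m + 1 ∧
      ∀ (k : Fin m) (j : Fin n),
        compare (h k p) (a j) = compare (h k (p + 1)) (a j) := by
  obtain ⟨p, hp, hconst⟩ := Fintype.exists_le_forall_apply_eq_apply_succ
    (g := fun x : Fin m × Fin n => fun p => (compare (h x.1 p) (a x.2)).rank)
    (fun x => (Ordering.monotone_rank_compare (a x.2)).comp (hmono x.1))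
    (fun _ _ => Ordering.rank_le_two _)
  refine ⟨p, ?_, fun k j => Ordering.rank_injective (hconst (k, j))⟩
  simp only [Fintype.card_prod, Fintype.card_fin] at hp
  nlinarith

theorem stmt_0 {I : Type*} [LinearOrder I] (m n : ℕ)
    (h : Fin m → ℕ → I)
    (hmono : ∀ k : Fin m, Monotone (h k))
    (hstrict : ∀ p : ℕ, ∀ k k' : Fin m, k < k' → h k p < h k' p)
    (a : Fin n → I) :
    ∃ p : ℕ, p ≤ 2 * n * m + 1 ∧
      ∀ (k : Fin m) (j : Fin n),
        compare (h k p) (a j) = compare (h k (p + 1)) (a j) :=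
  stmt_0_general m n h hmono a
end

section
/- Let I be a linear order and let m, n be natural numbers. Let h : Fin m → ℕ → I be a family of functions such that each h k is monotone (nondecreasing) or antitone (nonincreasing). Let a : Fin n → I be a tuple of elements of I. Then there exists p ≤ 2*n*m + 1 such that for every k : Fin m and every j : Fin n, compare (h k p) (a j) = compare (h k (p+1)) (a j); in other words, the tuples (h k p)_{k} and (h k (p+1))_{k} have the same order type over (a j)_{j}. -/
/-!
Encode `compare x b` as a number `0, 1, 2` that is monotone in `x`. For each pair `(k, j)` the
resulting sequence in `p` is monotone or antitone with values in `{0, 1, 2}`, so after flipping the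
antitone ones the sum over all `m * n` pairs is a monotone sequence bounded by `2 * n * m`. It cannot
increase at each of the first `2 * n * m + 1` steps, and where the sum is stationary, so is every
summand.
-/

theorem Monotone.exists_le_apply_eq_apply_succ {S : ℕ → ℕ} (hS : Monotone S) {B : ℕ}
    (hB : ∀ p, S p ≤ B) : ∃ p ≤ B, S p = S (p + 1) := by
  by_contra! hne
  have hgrow : ∀ p ≤ B + 1, p ≤ S p := by
    intro p
    induction p with
    | zero => simp
    | succ p ih =>
      intro hp
      have : S p ≤ S (p + 1) := hS (by omega)
      have := hne p (by omega)
      have := ih (by omega)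
      omega
  have := hgrow (B + 1) le_rfl
  have := hB (B + 1)
  omega

theorem exists_le_forall_apply_eq_apply_succ_of_monotone {ι : Type*} [Fintype ι]
    {g : ι → ℕ → ℕ} {c : ℕ} (hg : ∀ i, Monotone (g i)) (hc : ∀ i p, g i p ≤ c) :
    ∃ p ≤ Fintype.card ι * c, ∀ i, g i p = g i (p + 1) := by
  have hS : Monotone fun p => ∑ i, g i p := fun p q hpq =>
    Finset.sum_le_sum fun i _ => hg i hpq
  obtain ⟨p, hp, hpeq⟩ := hS.exists_le_apply_eq_apply_succ (B := Fintype.card ι * c) fun p => by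
    simpa using Finset.sum_le_sum fun i (_ : i ∈ Finset.univ) => hc i p
  exact ⟨p, hp, fun i =>
    (Finset.sum_eq_sum_iff_of_le fun i _ => hg i p.le_succ).1 hpeq i (Finset.mem_univ i)⟩

theorem exists_le_forall_apply_eq_apply_succ_of_monotone_or_antitone {ι : Type*} [Fintype ι]
    {g : ι → ℕ → ℕ} {c : ℕ} (hg : ∀ i, Monotone (g i) ∨ Antitone (g i))
    (hc : ∀ i p, g i p ≤ c) :
    ∃ p ≤ Fintype.card ι * c, ∀ i, g i p = g i (p + 1) := by
  classical
  set g' : ι → ℕ → ℕ := fun i p => if Monotone (g i) then g i p else c - g i p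
  have hg' : ∀ i, Monotone (g' i) := by
    intro i
    by_cases hm : Monotone (g i)
    · simp only [g', hm, if_true]
    · simp only [g', hm, if_false]
      exact fun p q hpq => Nat.sub_le_sub_left ((hg i).resolve_left hm hpq) c
  have hc' : ∀ i p, g' i p ≤ c := by
    intro i p
    simp only [g']
    split_ifs
    exacts [hc i p, Nat.sub_le c _]
  obtain ⟨p, hp, hpeq⟩ := exists_le_forall_apply_eq_apply_succ_of_monotone hg' hc'
  refine ⟨p, hp, fun i => ?_⟩
  have hi := hpeq i
  by_cases hm : Monotone (g i)
  · simpa [g', hm] using hi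
  · simp only [g', hm, if_false] at hi
    have := hc i p
    have := hc i (p + 1)
    omega

def orderingRank : Ordering → ℕ
  | .lt => 0
  | .eq => 1
  | .gt => 2

theorem orderingRank_injective : Function.Injective orderingRank := by
  intro o o'
  cases o <;> cases o' <;> simp [orderingRank]

theorem orderingRank_le_two (o : Ordering) : orderingRank o ≤ 2 := by
  cases o <;> simp [orderingRank]

theorem monotone_orderingRank_compare {I : Type*} [LinearOrder I] (b : I) :
    Monotone fun x => orderingRank (compare x b) := by
  intro x y hxy
  dsimp only
  cases hx : compare x b <;> cases hy : compare y b <;> simp only [orderingRank] <;> try omega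
  all_goals
    simp only [compare_lt_iff_lt, compare_eq_iff_eq, compare_gt_iff_gt] at hx hy
    order

theorem stmt_1 {I : Type*} [LinearOrder I] (m n : ℕ)
    (h : Fin m → ℕ → I)
    (hmono : ∀ k : Fin m, Monotone (h k) ∨ Antitone (h k))
    (a : Fin n → I) :
    ∃ p : ℕ, p ≤ 2 * n * m + 1 ∧
      ∀ (k : Fin m) (j : Fin n),
        compare (h k p) (a j) = compare (h k (p + 1)) (a j) := by
  have hrank : ∀ kj : Fin m × Fin n,
      Monotone (fun p => orderingRank (compare (h kj.1 p) (a kj.2))) ∨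
        Antitone (fun p => orderingRank (compare (h kj.1 p) (a kj.2))) := fun kj =>
    (hmono kj.1).imp (monotone_orderingRank_compare (a kj.2)).comp
      (monotone_orderingRank_compare (a kj.2)).comp_antitone
  obtain ⟨p, hp, hpeq⟩ :=
    exists_le_forall_apply_eq_apply_succ_of_monotone_or_antitone hrank
      fun _ _ => orderingRank_le_two _
  refine ⟨p, ?_, fun k j => orderingRank_injective (hpeq (k, j))⟩
  simp only [Fintype.card_prod, Fintype.card_fin] at hp
  linarith [show m * n * 2 = 2 * n * m by ring]
end

section
/- Let I be a linear order and let m, n be natural numbers. Let h : Fin m → ℕ → I be a family of functions such that each h k is monotone (nondecreasing) or antitone (nonincreasing), and let a : Fin n → I be a tuple of elements of I. Then the set B = {p : ℕ | ∃ k : Fin m, ∃ j : Fin n, compare (h k p) (a j) ≠ compare (h k (p+1)) (a j)} of indices at which the order type of the tuple (h k p)_{k} over (a j)_{j} changes is finite and has at most 2*m*n elements (B.ncard ≤ 2*m*n). -/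
/-! A monotone map into a finite partial order changes value at most `card - 1` times, since the
values just after the changes are pairwise distinct and differ from the initial value. The value of
`compare x a` is determined by the two propositions `x < a` and `a < x`, each of which is monotone
or antitone in `x` and takes values in `Prop`, a two-element order; so along a monotone or antitone
sequence `compare (f p) a` changes at most twice, and `B` is a union of `m * n` such sets. -/

def changePoints {β : Type*} (g : ℕ → β) : Set ℕ := {p | g p ≠ g (p + 1)}

section ChangePoints

variable {β : Type*} [PartialOrder β] {g : ℕ → β}

lemma Monotone.lt_succ_of_mem_changePoints (hg : Monotone g) {p : ℕ} (hp : p ∈ changePoints g) :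
    g p < g (p + 1) :=
  (hg p.le_succ).lt_of_ne hp

lemma Monotone.mapsTo_changePoints (hg : Monotone g) :
    Set.MapsTo (fun p => g (p + 1)) (changePoints g) {g 0}ᶜ := fun p hp h0 =>
  ((hg p.zero_le).trans_lt (hg.lt_succ_of_mem_changePoints hp)).ne' h0

lemma Monotone.injOn_changePoints (hg : Monotone g) :
    Set.InjOn (fun p => g (p + 1)) (changePoints g) := by
  have key : ∀ p ∈ changePoints g, ∀ q ∈ changePoints g, p < q → g (p + 1) ≠ g (q + 1) :=
    fun p _ q hq hpq => ((hg hpq).trans_lt (hg.lt_succ_of_mem_changePoints hq)).ne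
  intro p hp q hq hpq
  by_contra hne
  rcases Nat.lt_or_gt_of_ne hne with hlt | hlt
  · exact key p hp q hq hlt hpq
  · exact key q hq p hp hlt hpq.symm

lemma Monotone.finite_changePoints [Finite β] (hg : Monotone g) : (changePoints g).Finite :=
  Set.Finite.of_finite_image (Set.toFinite _) hg.injOn_changePoints

lemma Monotone.ncard_changePoints_le [Finite β] (hg : Monotone g) :
    (changePoints g).ncard ≤ Nat.card β - 1 := by
  calc (changePoints g).ncard ≤ ({g 0}ᶜ : Set β).ncard :=
        Set.ncard_le_ncard_of_injOn _ hg.mapsTo_changePoints hg.injOn_changePoints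
    _ = Nat.card β - 1 := by rw [Set.ncard_compl, Set.ncard_singleton]

lemma Antitone.finite_changePoints [Finite β] (hg : Antitone g) : (changePoints g).Finite :=
  hg.dual_right.finite_changePoints

lemma Antitone.ncard_changePoints_le [Finite β] (hg : Antitone g) :
    (changePoints g).ncard ≤ Nat.card β - 1 :=
  hg.dual_right.ncard_changePoints_le

lemma finite_changePoints [Finite β] (hg : Monotone g ∨ Antitone g) : (changePoints g).Finite :=
  hg.elim Monotone.finite_changePoints Antitone.finite_changePoints

lemma ncard_changePoints_le [Finite β] (hg : Monotone g ∨ Antitone g) :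
    (changePoints g).ncard ≤ Nat.card β - 1 :=
  hg.elim Monotone.ncard_changePoints_le Antitone.ncard_changePoints_le

end ChangePoints

section Compare

variable {α I : Type*} [Preorder α] [LinearOrder I]

lemma monotone_or_antitone_lt_const {f : α → I} (hf : Monotone f ∨ Antitone f) (a : I) :
    Monotone (fun x => f x < a) ∨ Antitone (fun x => f x < a) :=
  hf.symm.imp (fun hf _ _ hxy h => (hf hxy).trans_lt h) (fun hf _ _ hxy h => (hf hxy).trans_lt h)

lemma monotone_or_antitone_const_lt {f : α → I} (hf : Monotone f ∨ Antitone f) (a : I) :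
    Monotone (fun x => a < f x) ∨ Antitone (fun x => a < f x) :=
  hf.imp (fun hf _ _ hxy h => h.trans_le (hf hxy)) (fun hf _ _ hxy h => h.trans_le (hf hxy))

lemma compare_eq_compare_of_iff {x y a : I} (hlt : x < a ↔ y < a) (hgt : a < x ↔ a < y) :
    compare x a = compare y a := by
  rcases lt_trichotomy x a with h | rfl | h
  · rw [compare_lt_iff_lt.2 h, compare_lt_iff_lt.2 (hlt.1 h)]
  · rw [compare_eq_iff_eq.2 rfl, eq_comm, compare_eq_iff_eq]
    exact le_antisymm (not_lt.1 (mt hgt.2 (lt_irrefl x))) (not_lt.1 (mt hlt.2 (lt_irrefl x)))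
  · rw [compare_gt_iff_gt.2 h, compare_gt_iff_gt.2 (hgt.1 h)]

lemma changePoints_compare_subset (f : ℕ → I) (a : I) :
    changePoints (fun p => compare (f p) a) ⊆
      changePoints (fun p => f p < a) ∪ changePoints (fun p => a < f p) := by
  intro p hp
  by_contra hnot
  simp only [changePoints, Set.mem_union, Set.mem_ofPred, not_or, not_not] at hp hnot
  exact hp (compare_eq_compare_of_iff (Iff.of_eq hnot.1) (Iff.of_eq hnot.2))

variable {f : ℕ → I}

lemma finite_changePoints_compare (hf : Monotone f ∨ Antitone f) (a : I) :
    (changePoints fun p => compare (f p) a).Finite :=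
  ((finite_changePoints (monotone_or_antitone_lt_const hf a)).union
    (finite_changePoints (monotone_or_antitone_const_lt hf a))).subset
      (changePoints_compare_subset f a)

lemma ncard_changePoints_compare_le (hf : Monotone f ∨ Antitone f) (a : I) :
    (changePoints fun p => compare (f p) a).ncard ≤ 2 := by
  have hlt := monotone_or_antitone_lt_const hf a
  have hgt := monotone_or_antitone_const_lt hf a
  calc _ ≤ (changePoints (fun p => f p < a) ∪ changePoints (fun p => a < f p)).ncard :=
        Set.ncard_le_ncard (changePoints_compare_subset f a)
          ((finite_changePoints hlt).union (finite_changePoints hgt))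
    _ ≤ (changePoints (fun p => f p < a)).ncard + (changePoints (fun p => a < f p)).ncard :=
        Set.ncard_union_le _ _
    _ ≤ (Nat.card Prop - 1) + (Nat.card Prop - 1) :=
        add_le_add (ncard_changePoints_le hlt) (ncard_changePoints_le hgt)
    _ = 2 := by simp

end Compare

theorem stmt_4 {I : Type*} [LinearOrder I] (m n : ℕ)
    (h : Fin m → ℕ → I)
    (hmono : ∀ k : Fin m, Monotone (h k) ∨ Antitone (h k))
    (a : Fin n → I) :
    {p : ℕ | ∃ k : Fin m, ∃ j : Fin n,
        compare (h k p) (a j) ≠ compare (h k (p + 1)) (a j)}.Finite ∧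
    {p : ℕ | ∃ k : Fin m, ∃ j : Fin n,
        compare (h k p) (a j) ≠ compare (h k (p + 1)) (a j)}.ncard ≤ 2 * m * n := by
  have hB : {p : ℕ | ∃ k : Fin m, ∃ j : Fin n,
      compare (h k p) (a j) ≠ compare (h k (p + 1)) (a j)} =
        ⋃ kj : Fin m × Fin n, changePoints fun p => compare (h kj.1 p) (a kj.2) := by
    ext p
    simp [changePoints]
  rw [hB]
  refine ⟨Set.finite_iUnion fun kj => finite_changePoints_compare (hmono kj.1) _, ?_⟩
  calc _ ≤ ∑ kj : Fin m × Fin n, (changePoints fun p => compare (h kj.1 p) (a kj.2)).ncard :=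
        Set.ncard_iUnion_le_of_fintype _
    _ ≤ ∑ _kj : Fin m × Fin n, 2 :=
        Finset.sum_le_sum fun kj _ => ncard_changePoints_compare_le (hmono kj.1) _
    _ = 2 * m * n := by
        simp only [Finset.sum_const, Finset.card_univ, Fintype.card_prod, Fintype.card_fin,
          smul_eq_mul]
        ring
end
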